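/- Let R be a commutative Noetherian ring, a an ideal of R, and M an R-module. If the submodule (0 :_M a) = {m ∈ M : a·m = 0} is a minimax R-module, then for every positive integer n the submodule (0 :_M a^n) = {m ∈ M : a^n·m = 0} is a minimax R-module. -/

import Mathlib

open CategoryTheory

universe u

/-- An `R`-module is *minimax* if it has a finitely generated submodule
whose quotient is Artinian. -/
def IsMinimax (R : Type u) [CommRing R] (M : Type u) [AddCommGroup M]
    [Module R M] : Prop :=
  ∃ N : Submodule R M, N.FG ∧ IsArtinian R (M ⧸ N)

/-- The Ext module `Ext^i_R(X, M)`. -/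
noncomputable def extModule (R : Type u) [CommRing R]
    (X : Type u) [AddCommGroup X] [Module R X]
    (M : Type u) [AddCommGroup M] [Module R M] (i : ℕ) : ModuleCat.{u} R :=
  ((Ext R (ModuleCat.{u} R) i).obj (Opposite.op (ModuleCat.of R X))).obj
    (ModuleCat.of R M)

/-- The Ext module `Ext^i_R(R/a, M)`. -/
noncomputable def extQuotModule (R : Type u) [CommRing R] (a : Ideal R)
    (M : Type u) [AddCommGroup M] [Module R M] (i : ℕ) : ModuleCat.{u} R :=
  extModule R (R ⧸ a) M i

/-- An `R`-module `M` is `a`-cominimax if `Supp M ⊆ V(a)` and all the modules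
`Ext^i_R(R/a, M)` are minimax. -/
def IsCominimax (R : Type u) [CommRing R] (a : Ideal R) (M : Type u)
    [AddCommGroup M] [Module R M] : Prop :=
  Module.support R M ⊆ PrimeSpectrum.zeroLocus (a : Set R) ∧
    ∀ i : ℕ, IsMinimax R (extQuotModule R a M i)

section Lemmas

variable {R M M' : Type u} [CommRing R] [AddCommGroup M] [Module R M]
  [AddCommGroup M'] [Module R M']

lemma IsMinimax.of_equiv (e : M ≃ₗ[R] M') (h : IsMinimax R M) : IsMinimax R M' := by
  obtain ⟨N, hfg, hart⟩ := h
  exact ⟨N.map (e : M →ₗ[R] M'), hfg.map _,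
    isArtinian_of_linearEquiv (Submodule.Quotient.equiv N (N.map (e : M →ₗ[R] M')) e rfl)⟩

lemma IsMinimax.submodule [IsNoetherianRing R] (h : IsMinimax R M)
    (S : Submodule R M) : IsMinimax R S := by
  obtain ⟨N, hfg, hart⟩ := h
  haveI : IsNoetherian R N := isNoetherian_of_fg_of_noetherian N hfg
  refine ⟨N.comap S.subtype, ?_, ?_⟩
  · -- `N ⊓ S` is f.g. since it is a submodule of the noetherian module `N`
    have h2 : (N ⊓ S).FG := by
      have := (IsNoetherian.noetherian (Submodule.comap N.subtype (N ⊓ S))).map N.subtype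
      rwa [Submodule.map_comap_subtype, ← inf_assoc, inf_idem] at this
    exact Submodule.fg_of_fg_map_injective S.subtype S.injective_subtype
      (by rwa [Submodule.map_comap_subtype, inf_comm])
  · -- the quotient embeds in `M ⧸ N`
    set f : S →ₗ[R] M ⧸ N := N.mkQ.comp S.subtype with hf
    have hker : LinearMap.ker f = N.comap S.subtype := by
      rw [hf, LinearMap.ker_comp, Submodule.ker_mkQ]
    haveI : IsArtinian R (LinearMap.range f) := isArtinian_of_injective
      (LinearMap.range f).subtype (Submodule.injective_subtype _)
    have e := f.quotKerEquivRange
    rw [hker] at e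
    exact isArtinian_of_linearEquiv e.symm

lemma IsMinimax.of_injective [IsNoetherianRing R] (f : M →ₗ[R] M')
    (hf : Function.Injective f) (h : IsMinimax R M') : IsMinimax R M :=
  (h.submodule (LinearMap.range f)).of_equiv (LinearEquiv.ofInjective f hf).symm

lemma IsMinimax.extension (S : Submodule R M) (h1 : IsMinimax R S)
    (h2 : IsMinimax R (M ⧸ S)) : IsMinimax R M := by
  obtain ⟨N₁, h1fg, h1art⟩ := h1
  obtain ⟨N₂, h2fg, h2art⟩ := h2
  obtain ⟨s, hs⟩ := h2fg
  -- lift `N₂` to a f.g. submodule `T` of `M`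
  set T : Submodule R M := Submodule.span R (Quotient.out '' (s : Set (M ⧸ S))) with hT
  have hTfg : T.FG := Submodule.fg_span (s.finite_toSet.image _)
  have hTmap : Submodule.map S.mkQ T = N₂ := by
    rw [hT, Submodule.map_span, ← hs, ← Set.image_comp]
    congr 1
    have : ∀ x ∈ (s : Set (M ⧸ S)), (⇑S.mkQ ∘ Quotient.out) x = id x := by
      intro x _
      exact Quotient.out_eq x
    rw [Set.image_congr this, Set.image_id]
  set N : Submodule R M := N₁.map S.subtype ⊔ T with hN
  refine ⟨N, (h1fg.map _).sup hTfg, ?_⟩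
  set P : Submodule R M := S ⊔ N with hP
  have hNP : N ≤ P := le_sup_right
  have hNP' : N ≤ LinearMap.ker P.mkQ := by rwa [Submodule.ker_mkQ]
  set q : (M ⧸ N) →ₗ[R] M ⧸ P := N.liftQ P.mkQ hNP' with hq
  have hkerq : LinearMap.ker q = Submodule.map N.mkQ S := by
    rw [hq, Submodule.ker_liftQ, Submodule.ker_mkQ, hP, Submodule.map_sup]
    have hbot : Submodule.map N.mkQ N = ⊥ := by
      rw [eq_bot_iff]
      rintro x ⟨y, hy, rfl⟩
      simpa [Submodule.Quotient.mk_eq_zero] using hy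
    rw [hbot, sup_bot_eq]
  -- kernel of q is Artinian
  set g : S →ₗ[R] M ⧸ N := N.mkQ.comp S.subtype with hg
  have hrange : LinearMap.range g = Submodule.map N.mkQ S := by
    rw [hg, LinearMap.range_comp, Submodule.range_subtype]
  have hle : N₁ ≤ LinearMap.ker g := by
    intro x hx
    have hxN : (x : M) ∈ N := Submodule.mem_sup_left (Submodule.mem_map_of_mem hx)
    simp only [hg, LinearMap.mem_ker, LinearMap.comp_apply, Submodule.subtype_apply,
      Submodule.mkQ_apply]
    rwa [Submodule.Quotient.mk_eq_zero]
  haveI : IsArtinian R ((S ⧸ N₁) ⧸ Submodule.map N₁.mkQ (LinearMap.ker g)) :=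
    isArtinian_of_quotient_of_artinian _
  haveI : IsArtinian R (S ⧸ LinearMap.ker g) :=
    isArtinian_of_linearEquiv (Submodule.quotientQuotientEquivQuotient N₁ (LinearMap.ker g) hle)
  haveI hKart : IsArtinian R (LinearMap.ker q) := by
    rw [hkerq, ← hrange]
    exact isArtinian_of_linearEquiv g.quotKerEquivRange
  -- M ⧸ P is Artinian
  have hle2 : N₂ ≤ Submodule.map S.mkQ P := by
    rw [← hTmap]
    exact Submodule.map_mono (le_trans le_sup_right hNP)
  haveI : IsArtinian R (((M ⧸ S) ⧸ N₂) ⧸ Submodule.map N₂.mkQ (Submodule.map S.mkQ P)) :=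
    isArtinian_of_quotient_of_artinian _
  haveI : IsArtinian R ((M ⧸ S) ⧸ Submodule.map S.mkQ P) :=
    isArtinian_of_linearEquiv (Submodule.quotientQuotientEquivQuotient N₂ _ hle2)
  haveI : IsArtinian R (M ⧸ P) :=
    isArtinian_of_linearEquiv (Submodule.quotientQuotientEquivQuotient S P le_sup_left)
  exact isArtinian_of_range_eq_ker (LinearMap.ker q).subtype q (Submodule.range_subtype _)

lemma IsMinimax.pi [IsNoetherianRing R] (h : IsMinimax R M) :
    ∀ k : ℕ, IsMinimax R (Fin k → M) := by
  intro k
  induction k with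
  | zero =>
    refine ⟨⊥, Submodule.fg_bot, ?_⟩
    haveI : Subsingleton (Fin 0 → M) := by
      constructor; intro a b; funext i; exact absurd i.2 (by omega)
    infer_instance
  | succ k ih =>
    set p : (Fin (k + 1) → M) →ₗ[R] (Fin k → M) := LinearMap.funLeft R M Fin.succ with hp
    have hsurj : Function.Surjective p :=
      LinearMap.funLeft_surjective_of_injective R M _ (Fin.succ_injective k)
    apply IsMinimax.extension (LinearMap.ker p)
    · refine IsMinimax.of_injective
        ((LinearMap.proj (0 : Fin (k + 1))).comp (LinearMap.ker p).subtype) ?_ h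
      intro x y hxy
      apply Subtype.ext
      funext i
      induction i using Fin.cases with
      | zero => exact hxy
      | succ j =>
        have hx := congrFun (LinearMap.mem_ker.mp x.2) j
        have hy := congrFun (LinearMap.mem_ker.mp y.2) j
        simp only [hp, LinearMap.funLeft_apply, Pi.zero_apply] at hx hy
        rw [hx, hy]
    · exact ih.of_equiv (p.quotKerEquivOfSurjective hsurj).symm

end Lemmas

theorem minimax_torsionBySet_pow (R : Type u) [CommRing R] [IsNoetherianRing R]
    (a : Ideal R) (M : Type u) [AddCommGroup M] [Module R M]
    (h : IsMinimax R (Submodule.torsionBySet R M (a : Set R)))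
    (n : ℕ) (hn : 0 < n) :
    IsMinimax R (Submodule.torsionBySet R M ((a ^ n : Ideal R) : Set R)) := by
  obtain ⟨m, rfl⟩ : ∃ m, n = m + 1 := ⟨n - 1, by omega⟩
  clear hn
  induction m with
  | zero => rw [show a ^ (0 + 1) = a by rw [zero_add, pow_one]]; exact h
  | succ k ih =>
    obtain ⟨s, hs⟩ := IsNoetherian.noetherian a
    set g : Fin s.card → R := fun i => (s.equivFin.symm i : R) with hgdef
    have hg : ∀ i, g i ∈ a := by
      intro i
      rw [← hs]
      exact Submodule.subset_span (s.equivFin.symm i).2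
    set T := Submodule.torsionBySet R M ((a ^ (k + 2) : Ideal R) : Set R) with hTdef
    set Tn := Submodule.torsionBySet R M ((a ^ (k + 1) : Ideal R) : Set R) with hTndef
    have key : ∀ i (x : T), g i • (x : M) ∈ Tn := by
      intro i x
      rw [hTndef, Submodule.mem_torsionBySet_iff]
      rintro ⟨c, hc⟩
      have h1 : c * g i ∈ (a ^ (k + 2) : Ideal R) := by
        rw [pow_succ]
        exact Ideal.mul_mem_mul hc (hg i)
      have h2 := (Submodule.mem_torsionBySet_iff _ _).mp x.2 ⟨c * g i, h1⟩
      simpa [smul_smul] using h2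
    set φ : T →ₗ[R] (Fin s.card → Tn) := LinearMap.pi fun i =>
      LinearMap.codRestrict Tn ((LinearMap.lsmul R M (g i)).comp T.subtype)
        (fun x => key i x) with hφ
    apply IsMinimax.extension (LinearMap.ker φ)
    · -- the kernel embeds into the `a`-torsion
      have hmem : ∀ x : LinearMap.ker φ, ((x : T) : M) ∈
          Submodule.torsionBySet R M (a : Set R) := by
        intro x
        rw [Submodule.mem_torsionBySet_iff]
        rintro ⟨c, hc⟩
        have hx : ∀ i, g i • ((x : T) : M) = 0 := by
          intro i
          have h0 := congrFun (LinearMap.mem_ker.mp x.2) i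
          have := congrArg Subtype.val h0
          exact this
        show c • ((x : T) : M) = 0
        have hc' : c ∈ Submodule.span R (s : Set R) := by rw [hs]; exact hc
        clear hc
        induction hc' using Submodule.span_induction with
        | mem y hy =>
          have : g (s.equivFin ⟨y, hy⟩) = y := by
            simp [hgdef]
          rw [← this]
          exact hx _
        | zero => simp
        | add u v hu hv ihu ihv => rw [add_smul, ihu, ihv, add_zero]
        | smul r y hy ihy => rw [smul_eq_mul, mul_smul, ihy, smul_zero]
      refine IsMinimax.of_injective (LinearMap.codRestrict
        (Submodule.torsionBySet R M (a : Set R))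
        (T.subtype.comp (LinearMap.ker φ).subtype) hmem) ?_ h
      intro u v huv
      have h' := Subtype.ext_iff.mp huv
      exact Subtype.ext (Subtype.ext h')
    · -- the quotient embeds into a finite power of `Tn`
      exact ((ih.pi s.card).submodule (LinearMap.range φ)).of_equiv
        φ.quotKerEquivRange.symm
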